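/- arXiv:2510.02021 — 2 statements merged into one kernel-verified Lean document; each statement's English description precedes it below -/
import Mathlib

section
/- Let U, D ≥ 1, fix w ∈ ℂ^D, and let S_D be drawn uniformly at random from S^{U×D}. Then the probability that the single-antenna jammer (I = 1) with data-phase transmit vector w is eclipsed (perfect-CSI sense) equals exactly 1 − (1 − q(w))^U. -/
open scoped BigOperators
open scoped Classical

noncomputable section

/-- The QPSK constellation `{(1+i)/√2, (1−i)/√2, (−1+i)/√2, (−1−i)/√2}`. -/
def QPSK : Finset ℂ :=
  {(1 + Complex.I) / (Real.sqrt 2 : ℂ), (1 - Complex.I) / (Real.sqrt 2 : ℂ),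
   (-1 + Complex.I) / (Real.sqrt 2 : ℂ), (-1 - Complex.I) / (Real.sqrt 2 : ℂ)}

/-- The finite set of `U × D` matrices with all entries in the QPSK constellation. -/
def qpskMatrices (U D : ℕ) : Finset (Matrix (Fin U) (Fin D) ℂ) :=
  Fintype.piFinset fun _ : Fin U => Fintype.piFinset fun _ : Fin D => QPSK

/-- Probability of an event under the uniform distribution on `S^{U×D}`. -/
def probM (U D : ℕ) (P : Matrix (Fin U) (Fin D) ℂ → Prop) : ℝ :=
  (((qpskMatrices U D).filter P).card : ℝ) / ((qpskMatrices U D).card : ℝ)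

/-- The finite set of vectors in `S^D`. -/
def qpskVecs (D : ℕ) : Finset (Fin D → ℂ) := Fintype.piFinset fun _ : Fin D => QPSK

/-- The ℓ₀-"norm": number of nonzero entries. -/
def zeroNorm {D : ℕ} (w : Fin D → ℂ) : ℕ := (Finset.univ.filter fun k => w k ≠ 0).card

/-- Two vectors are collinear if stacking them gives a matrix of rank at most 1. -/
def Collinear2 {D : ℕ} (x y : Fin D → ℂ) : Prop :=
  (Matrix.of ![x, y]).rank ≤ 1

/-- `qProb D w`: probability, for `s` uniform on `S^D`, that some `s̃ ∈ S^D`, `s̃ ≠ s`,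
has `s̃ − s` collinear with `w`. -/
def qProb (D : ℕ) (w : Fin D → ℂ) : ℝ :=
  (((qpskVecs D).filter fun s => ∃ st : Fin D → ℂ, (∀ k, st k ∈ QPSK) ∧ st ≠ s ∧
      Collinear2 (st - s) w).card : ℝ) / ((qpskVecs D).card : ℝ)

/-- Eclipsing in the perfect-CSI sense. -/
def EclipsedCSI {U I D : ℕ} (S_D : Matrix (Fin U) (Fin D) ℂ)
    (W_D : Matrix (Fin I) (Fin D) ℂ) : Prop :=
  ∃ St : Matrix (Fin U) (Fin D) ℂ, (∀ i j, St i j ∈ QPSK) ∧ St ≠ S_D ∧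
    (Matrix.fromRows (S_D - St) W_D).rank ≤ I

/-- `𝒢_{B−I}(ℂ^B)`: Hermitian idempotent `B×B` matrices `P` with `rank (1 − P) ≤ I`. -/
def Grassmannian (B I : ℕ) : Set (Matrix (Fin B) (Fin B) ℂ) :=
  {P | P.IsHermitian ∧ P * P = P ∧ (1 - P).rank ≤ I}

/-- `P` is the orthogonal projection onto the orthogonal complement of the column
space of `J`. -/
def IsOrthProjComplCol {B I : ℕ} (J : Matrix (Fin B) (Fin I) ℂ)
    (P : Matrix (Fin B) (Fin B) ℂ) : Prop :=
  P.IsHermitian ∧ P * P = P ∧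
    LinearMap.range (Matrix.toEuclideanLin P) = (LinearMap.range (Matrix.toEuclideanLin J))ᗮ

/-- Squared Frobenius norm. -/
def sqFrob {m n : ℕ} (A : Matrix (Fin m) (Fin n) ℂ) : ℝ := ∑ i, ∑ j, ‖A i j‖ ^ 2

/-- Right pseudoinverse `S_Tᴴ (S_T S_Tᴴ)⁻¹` of a (full-rank, wide) pilot matrix. -/
def pinvWide {U T : ℕ} (S_T : Matrix (Fin U) (Fin T) ℂ) : Matrix (Fin T) (Fin U) ℂ :=
  S_T.conjTranspose * (S_T * S_T.conjTranspose)⁻¹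

/-- Eclipsing in the channel-estimation sense. -/
def EclipsedCE {U I D T : ℕ} (S_T : Matrix (Fin U) (Fin T) ℂ)
    (S_D : Matrix (Fin U) (Fin D) ℂ) (W_T : Matrix (Fin I) (Fin T) ℂ)
    (W_D : Matrix (Fin I) (Fin D) ℂ) : Prop :=
  ∃ St : Matrix (Fin U) (Fin D) ℂ, (∀ i j, St i j ∈ QPSK) ∧ St ≠ S_D ∧
    (Matrix.fromRows (S_D - St) (W_D - W_T * pinvWide S_T * St)).rank ≤ I

end

/-
A matrix `S̃ ≠ S_D` eclipses the jammer iff all rows of `S_D − S̃` are multiples of `w`; changing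
`S_D` in a single row `u` already suffices, so the jammer is eclipsed exactly when some row of
`S_D` is eclipsable on its own. The rows of a uniform `S_D` are independent and uniform on `S^D`,
so no row is eclipsable with probability `(1 − q(w))^U`.
-/

open Finset

theorem Matrix.rank_le_rank_of_row_mem_span {R m m' n : Type*} [Field R] [Fintype m]
    [Fintype m'] [Fintype n] (A : Matrix m n R) (B : Matrix m' n R)
    (h : ∀ i, A.row i ∈ Submodule.span R (Set.range B.row)) : A.rank ≤ B.rank := by
  rw [Matrix.rank_eq_finrank_span_row, Matrix.rank_eq_finrank_span_row]
  exact Submodule.finrank_mono (Submodule.span_le.2 (Set.range_subset_iff.2 h))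

/-- The event of `qProb`: some other QPSK vector differs from `s` by a multiple of `w`. -/
def RowEclipsed {D : ℕ} (w s : Fin D → ℂ) : Prop :=
  ∃ st : Fin D → ℂ, (∀ k, st k ∈ QPSK) ∧ st ≠ s ∧ Collinear2 (st - s) w

theorem eclipsedCSI_single_iff_exists_rowEclipsed {U D : ℕ} (w : Fin D → ℂ)
    (S : Matrix (Fin U) (Fin D) ℂ) (hS : ∀ i j, S i j ∈ QPSK) :
    EclipsedCSI S (Matrix.of fun _ : Fin 1 => w) ↔ ∃ u, RowEclipsed w (S u) := by
  constructor
  · rintro ⟨St, hSt, hne, hrank⟩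
    obtain ⟨u, hu⟩ : ∃ u, St u ≠ S u := Function.ne_iff.1 hne
    refine ⟨u, St u, hSt u, hu, le_trans (Matrix.rank_le_rank_of_row_mem_span _ _ ?_) hrank⟩
    rw [Fin.forall_fin_two]
    constructor
    · have : (Matrix.of ![St u - S u, w]).row 0 =
          -(Matrix.fromRows (S - St) (Matrix.of fun _ : Fin 1 => w)).row (Sum.inl u) := by
        ext j; simp [Matrix.row]
      rw [this]
      exact Submodule.neg_mem _ (Submodule.subset_span ⟨_, rfl⟩)
    · exact Submodule.subset_span ⟨Sum.inr 0, rfl⟩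
  · rintro ⟨u, st, hst, hne, hcol⟩
    refine ⟨S.updateRow u st, fun i j => ?_, fun h => hne ?_,
      le_trans (Matrix.rank_le_rank_of_row_mem_span _ _ ?_) hcol⟩
    · rcases eq_or_ne i u with rfl | hi
      · simpa using hst j
      · simpa [hi] using hS i j
    · simpa using congrFun h u
    · rintro (i | i)
      · rcases eq_or_ne i u with rfl | hi
        · have : (Matrix.fromRows (S - S.updateRow i st) (Matrix.of fun _ : Fin 1 => w)).row
              (Sum.inl i) = -(Matrix.of ![st - S i, w]).row 0 := by
            ext j; simp [Matrix.row]
          rw [this]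
          exact Submodule.neg_mem _ (Submodule.subset_span ⟨_, rfl⟩)
        · have : (Matrix.fromRows (S - S.updateRow u st) (Matrix.of fun _ : Fin 1 => w)).row
              (Sum.inl i) = 0 := by
            ext j; simp [Matrix.row, hi]
          rw [this]
          exact Submodule.zero_mem _
      · exact Submodule.subset_span ⟨1, rfl⟩

theorem card_piFinset_filter_exists {α : Type*} (n : ℕ) (s : Finset α) (P : α → Prop) :
    (#((Fintype.piFinset fun _ : Fin n => s).filter fun f => ∃ i, P (f i)) : ℝ) =
      (#s : ℝ) ^ n - (#(s.filter fun a => ¬ P a) : ℝ) ^ n := by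
  have hforall : (Fintype.piFinset fun _ : Fin n => s).filter (fun f => ¬ ∃ i, P (f i)) =
      Fintype.piFinset fun _ => s.filter fun a => ¬ P a := by
    ext f
    simp [Fintype.mem_piFinset, forall_and]
  have hsplit := card_filter_add_card_filter_not (s := Fintype.piFinset fun _ : Fin n => s)
    (fun f => ∃ i, P (f i))
  rw [hforall, Fintype.card_piFinset_const, Fintype.card_piFinset_const] at hsplit
  rw [eq_sub_iff_add_eq]
  exact_mod_cast hsplit

theorem prob_piFinset_exists {α : Type*} (n : ℕ) (s : Finset α) (hs : s.Nonempty)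
    (P : α → Prop) :
    (#((Fintype.piFinset fun _ : Fin n => s).filter fun f => ∃ i, P (f i)) : ℝ) /
        #(Fintype.piFinset fun _ : Fin n => s) =
      1 - (1 - (#(s.filter P) : ℝ) / #s) ^ n := by
  have hs' : (#s : ℝ) ≠ 0 := by exact_mod_cast hs.card_pos.ne'
  have hcompl : (1 : ℝ) - #(s.filter P) / #s = #(s.filter fun a => ¬ P a) / #s := by
    rw [eq_div_iff hs', sub_mul, div_mul_cancel₀ _ hs', one_mul, sub_eq_iff_eq_add']
    exact_mod_cast (card_filter_add_card_filter_not (s := s) P).symm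
  rw [card_piFinset_filter_exists, Fintype.card_piFinset_const, hcompl, div_pow, Nat.cast_pow]
  field_simp

theorem QPSK_nonempty : QPSK.Nonempty := ⟨_, Finset.mem_insert_self _ _⟩

theorem stmt11_general (U D : ℕ) (w : Fin D → ℂ) :
    probM U D (fun S_D => EclipsedCSI S_D (Matrix.of fun _ : Fin 1 => w)) =
      1 - (1 - qProb D w) ^ U := by
  have hevent : (qpskMatrices U D).filter
        (fun S_D => EclipsedCSI S_D (Matrix.of fun _ : Fin 1 => w)) =
      (Fintype.piFinset fun _ : Fin U => qpskVecs D).filter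
        (fun S_D => ∃ u, RowEclipsed w (S_D u)) :=
    filter_congr fun S hS => eclipsedCSI_single_iff_exists_rowEclipsed w S
      fun i j => Fintype.mem_piFinset.1 (Fintype.mem_piFinset.1 hS i) j
  rw [probM, hevent]
  exact prob_piFinset_exists U (qpskVecs D)
    (Fintype.piFinset_nonempty.2 fun _ => QPSK_nonempty) (RowEclipsed w)

/-- For `S_D` uniform on `S^{U×D}`, the probability that the
single-antenna jammer with transmit vector `w` is eclipsed (perfect-CSI sense)
equals exactly `1 − (1 − q(w))^U`. -/
theorem stmt11 (U D : ℕ) (hU : 0 < U) (hD : 0 < D) (w : Fin D → ℂ) :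
    probM U D (fun S_D => EclipsedCSI S_D (Matrix.of fun _ : Fin 1 => w)) =
      1 - (1 - qProb D w) ^ U :=
  stmt11_general U D w
end

section
/- Let U, D, I ≥ 1, let S_D ∈ S^{U×D}, and let W_D ∈ ℂ^{I×D} satisfy rank(W_D) < I. Then the jammer is eclipsed (perfect-CSI sense): there exists S̃ ∈ S^{U×D} with S̃ ≠ S_D such that the (U+I)×D matrix obtained by stacking S_D − S̃ on top of W_D has rank at most I. -/
open scoped BigOperators
open scoped Classical

/-!
Flipping the sign of a single entry of `S_D` keeps it in the QPSK alphabet, and the difference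
`S_D - S̃` is then a nonzero multiple of a matrix unit, of rank at most one. Since the rank of a
stack of rows is subadditive, stacking it on `W_D` gives rank at most `1 + rank W_D ≤ I`.
-/

namespace Matrix

variable {m₁ m₂ n K : Type*}

theorem rank_fromRows_le [Field K] [Finite m₁] [Finite m₂] [Fintype n]
    (A : Matrix m₁ n K) (B : Matrix m₂ n K) :
    (fromRows A B).rank ≤ A.rank + B.rank := by
  rw [rank_eq_finrank_span_row, rank_eq_finrank_span_row A, rank_eq_finrank_span_row B]
  have hrows : Set.range (fromRows A B).row = Set.range A.row ∪ Set.range B.row :=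
    Set.Sum.elim_range A B
  rw [hrows, Submodule.span_union]
  exact Submodule.finrank_add_le_finrank_add_finrank _ _

theorem rank_single_le_one [CommSemiring K] [StrongRankCondition K] [DecidableEq m₁]
    [DecidableEq n] [Fintype n] (i : m₁) (j : n) (c : K) :
    (single i j c).rank ≤ 1 := by
  have h : single i j c = vecMulVec (Pi.single i c) (Pi.single j 1) := by
    ext i' j'
    by_cases hi : i = i' <;> by_cases hj : j = j' <;>
      simp [single, vecMulVec, Pi.single_apply, hi, hj, eq_comm]
  exact h ▸ rank_vecMulVec_le _ _

end Matrix

theorem neg_mem_QPSK {x : ℂ} (hx : x ∈ QPSK) : -x ∈ QPSK := by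
  simp only [QPSK, Finset.mem_insert, Finset.mem_singleton] at hx ⊢
  rcases hx with rfl | rfl | rfl | rfl
  · right; right; right; ring
  · right; right; left; ring
  · right; left; ring
  · left; ring

theorem ne_zero_of_mem_QPSK {x : ℂ} (hx : x ∈ QPSK) : x ≠ 0 := by
  have hsqrt : (Real.sqrt 2 : ℂ) ≠ 0 := by
    rw [Complex.ofReal_ne_zero, Real.sqrt_ne_zero']
    norm_num
  simp only [QPSK, Finset.mem_insert, Finset.mem_singleton] at hx
  rcases hx with rfl | rfl | rfl | rfl <;>
    exact div_ne_zero (by simp [Complex.ext_iff]) hsqrt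

theorem exists_qpsk_ne_sub_eq_single {U D : ℕ} (S : Matrix (Fin U) (Fin D) ℂ)
    (hS : ∀ i j, S i j ∈ QPSK) (i : Fin U) (j : Fin D) :
    ∃ St : Matrix (Fin U) (Fin D) ℂ, (∀ i j, St i j ∈ QPSK) ∧ St ≠ S ∧
      S - St = Matrix.single i j (2 * S i j) := by
  refine ⟨S - Matrix.single i j (2 * S i j), fun i' j' => ?_, ?_, sub_sub_cancel _ _⟩
  · by_cases h : i = i' ∧ j = j'
    · obtain ⟨rfl, rfl⟩ := h
      rw [Matrix.sub_apply, Matrix.single_apply_same, show S i j - 2 * S i j = -S i j by ring]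
      exact neg_mem_QPSK (hS i j)
    · rw [Matrix.sub_apply, Matrix.single_apply_of_ne _ _ _ _ _ h, sub_zero]
      exact hS i' j'
  · intro h
    have hentry := congrFun (congrFun (sub_eq_self.mp h) i) j
    rw [Matrix.single_apply_same] at hentry
    exact mul_ne_zero two_ne_zero (ne_zero_of_mem_QPSK (hS i j)) hentry

theorem stmt14_general (U I D : ℕ) (hU : 0 < U) (hD : 0 < D)
    (S_D : Matrix (Fin U) (Fin D) ℂ) (hSD : ∀ i j, S_D i j ∈ QPSK)
    (W_D : Matrix (Fin I) (Fin D) ℂ) (hW : W_D.rank < I) :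
    EclipsedCSI S_D W_D := by
  obtain ⟨St, hSt, hne, hdiff⟩ := exists_qpsk_ne_sub_eq_single S_D hSD ⟨0, hU⟩ ⟨0, hD⟩
  refine ⟨St, hSt, hne, ?_⟩
  calc (Matrix.fromRows (S_D - St) W_D).rank
      ≤ (S_D - St).rank + W_D.rank := Matrix.rank_fromRows_le _ _
    _ ≤ 1 + W_D.rank := by grw [hdiff, Matrix.rank_single_le_one]
    _ ≤ I := by omega

/-- Any jammer with `rank W_D < I` is eclipsed (perfect-CSI sense). -/
theorem stmt14 (U I D : ℕ) (hU : 0 < U) (hI : 0 < I) (hD : 0 < D)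
    (S_D : Matrix (Fin U) (Fin D) ℂ) (hSD : ∀ i j, S_D i j ∈ QPSK)
    (W_D : Matrix (Fin I) (Fin D) ℂ) (hW : W_D.rank < I) :
    EclipsedCSI S_D W_D :=
  stmt14_general U I D hU hD S_D hSD W_D hW
end
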